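/- arXiv:1010.5614 — 2 statements merged into one kernel-verified Lean document; each statement's English description precedes it below -/
import Mathlib

section
/- For all natural numbers p, q and N with N ≥ p, the binomial identity Σ_{i=1}^{N−p} C(N−i, p) · C(N+q−i, q) = C(N+q, p+q+1) · C(p+q, q) holds, where C(a,b) denotes the binomial coefficient. (This computes the number of semistandard Young tableaux of hook shape (q+1, 1^p) with entries in {1,…,N}.) -/
/-!
Substituting `j = N - i`, the sum runs over `p ≤ j < N`. The subset-of-a-subset identity
`C(j,p) C(j+q,q) = C(j+q,p+q) C(p+q,q)` pulls out the constant factor `C(p+q,q)`, and the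
remaining sum `Σ_{p+q ≤ k < N+q} C(k,p+q)` is the hockey-stick identity.
-/

open Finset

theorem Finset.sum_Icc_one_sub_eq_sum_Ico {M : Type*} [AddCommMonoid M] (f : ℕ → M) (p N : ℕ) :
    ∑ i ∈ Icc 1 (N - p), f (N - i) = ∑ j ∈ Ico p N, f j := by
  refine sum_nbij' (N - ·) (N - ·) ?_ ?_ ?_ ?_ fun _ _ ↦ rfl <;>
    · intro i hi
      simp only [mem_Icc, mem_Ico] at hi ⊢
      omega

namespace Nat

theorem sum_Ico_choose (r n : ℕ) : ∑ k ∈ Ico r n, k.choose r = n.choose (r + 1) := by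
  cases n with
  | zero => simp
  | succ n => rw [Ico_add_one_right_eq_Icc, sum_Icc_choose]

theorem choose_mul_add_choose (j p q : ℕ) :
    j.choose p * (j + q).choose q = (j + q).choose (p + q) * (p + q).choose q := by
  rw [choose_mul (Nat.le_add_left q p), Nat.add_sub_cancel, Nat.add_sub_cancel, mul_comm]

end Nat

theorem statement2_general (p q N : ℕ) :
    ∑ i ∈ Finset.Icc 1 (N - p), (N - i).choose p * (N + q - i).choose q =
      (N + q).choose (p + q + 1) * (p + q).choose q := by
  have hshift : ∀ i ∈ Icc 1 (N - p), N + q - i = N - i + q := fun i hi ↦ by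
    rw [mem_Icc] at hi
    omega
  calc ∑ i ∈ Icc 1 (N - p), (N - i).choose p * (N + q - i).choose q
      = ∑ j ∈ Ico p N, j.choose p * (j + q).choose q := by
        rw [← sum_Icc_one_sub_eq_sum_Ico]
        exact sum_congr rfl fun i hi ↦ by rw [hshift i hi]
    _ = (∑ k ∈ Ico (p + q) (N + q), k.choose (p + q)) * (p + q).choose q := by
        simp_rw [Nat.choose_mul_add_choose, ← sum_mul]
        rw [sum_Ico_add' (·.choose (p + q)) p N q]
    _ = (N + q).choose (p + q + 1) * (p + q).choose q := by
        rw [Nat.sum_Ico_choose]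

/-- The binomial identity counting semistandard Young tableaux of hook shape
`(q+1, 1^p)` with entries in `{1, …, N}`:
`Σ_{i=1}^{N-p} C(N-i,p)·C(N+q-i,q) = C(N+q, p+q+1)·C(p+q, q)`. -/
theorem statement2 (p q N : ℕ) (hN : p ≤ N) :
    ∑ i ∈ Finset.Icc 1 (N - p), (N - i).choose p * (N + q - i).choose q =
      (N + q).choose (p + q + 1) * (p + q).choose q :=
  statement2_general p q N
end

section
/- For all g ≥ 0, n ≥ 0, and m ≥ 0, the following recursion holds in ℤ: (m+1)·c_g(n+1, m+1) = (m+1)·c_g(n, m+1) + (2n+1−m)·c_g(n, m). -/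
/-!
Count the diagrams with `n + 1` chords and `m + 1` 1-chords together with a marked 1-chord:
there are `(m + 1) c_g(n+1, m+1)` of them. Deleting the marked 1-chord leaves a diagram with `n`
chords and a marked gap among its `2n + 1` gaps, and does not change the genus: reinserting the
chord makes one point a fixed point of `τ ∘ ι` and splices its neighbour into an existing cycle,
so the number of cycles grows by one along with `n`. Conversely, inserting a 1-chord into a gap
gives `m + 1` 1-chords exactly when either the gap lies inside one of the `m + 1` 1-chords of a
diagram counted by `c_g(n, m+1)`, which is destroyed, or avoids the `m` 1-chords of a diagram
counted by `c_g(n, m)`. Hence the count is also `(m + 1) c_g(n, m+1) + (2n + 1 - m) c_g(n, m)`.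
-/

/-- Number of cycles (including fixed points as 1-cycles) of a permutation of `Fin m`. -/
def numCycles {m : ℕ} (σ : Equiv.Perm (Fin m)) : ℕ :=
  (m - σ.support.card) + σ.cycleType.card

/-- `cLCD2 g n m` : the number of linear chord diagrams with `n` chords, genus `g` and
`m` 1-chords, identified with fixed-point-free involutions `ι` of `Fin (2n)` such that
the number of cycles `r` of `τₙ ∘ ι` (where `τₙ = finRotate (2n)` is the standard
`2n`-cycle) satisfies `r = n + 1 - 2g` and the number of indices `i` with `ι i = i + 1`
is `m`.  By convention `cLCD2 0 0 0 = 1` and `cLCD2 g 0 m = 0` otherwise. -/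
noncomputable def cLCD2 (g n m : ℕ) : ℕ :=
  if n = 0 then (if g = 0 ∧ m = 0 then 1 else 0)
  else Nat.card {ι : Equiv.Perm (Fin (2 * n)) //
    ι * ι = 1 ∧ (∀ i, ι i ≠ i) ∧
    numCycles (finRotate (2 * n) * ι) + 2 * g = n + 1 ∧
    (Finset.univ.filter fun i : Fin (2 * n) => ((ι i : ℕ) = (i : ℕ) + 1)).card = m}

open Equiv Equiv.Perm Finset

namespace Equiv.Perm

variable {α β : Type*}

theorem SameCycle.of_forall_sameCycle_apply {f c : Perm α} (h : ∀ x, f.SameCycle x (c x))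
    {x y : α} (hxy : c.SameCycle x y) : f.SameCycle x y := by
  obtain ⟨k, rfl⟩ := hxy
  induction k using Int.induction_on with
  | zero => exact SameCycle.refl _ _
  | succ k ih =>
    rw [add_comm, zpow_one_add, mul_apply]
    exact ih.trans (h _)
  | pred k ih =>
    rw [sub_eq_neg_add, zpow_add, zpow_neg_one, mul_apply]
    exact ih.trans (by simpa using (h (c⁻¹ ((c ^ (-(k : ℤ))) x))).symm)

theorem exists_extendDomain_eq {P : β → Prop} [DecidablePred P]
    (f : α ≃ Subtype P) {σ : Perm β} (hσ : ∀ b, ¬P b → σ b = b) :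
    ∃ τ : Perm α, τ.extendDomain f = σ := by
  have hP : ∀ b, P (σ b) ↔ P b := fun b => by
    by_cases hb : P b
    · refine iff_of_true (not_not.1 fun h => ?_) hb
      exact h (by rwa [σ.injective (hσ _ h)])
    · rw [hσ b hb]
  refine ⟨f.symm.permCongr (σ.subtypePerm hP), Equiv.ext fun b => ?_⟩
  by_cases hb : P b
  · simp [extendDomain_apply_subtype _ _ hb, permCongr_apply]
  · rw [extendDomain_apply_not_subtype _ _ hb, hσ b hb]

variable [DecidableEq α] {c : Perm α} {a b : α}

theorem support_mul_swap_of_apply_eq_self [Fintype α] (ha : c a ≠ a) (hb : c b = b) :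
    (c * swap a b).support = insert b c.support := by
  have hab : a ≠ b := by rintro rfl; exact ha hb
  ext x
  by_cases hxa : x = a
  · subst hxa; simp [hb, hab.symm, ha]
  by_cases hxb : x = b
  · subst hxb
    simp only [mem_support, mul_apply, swap_apply_right, mem_insert, true_or, iff_true]
    exact fun h => hab (c.injective (h.trans hb.symm))
  · simp [swap_apply_of_ne_of_ne hxa hxb, hxb]

theorem IsCycle.mul_swap_of_apply_eq_self (hc : c.IsCycle) (ha : c a ≠ a) (hb : c b = b) :
    (c * swap a b).IsCycle := by
  set f := c * swap a b
  have hab : a ≠ b := by rintro rfl; exact ha hb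
  have hfa : f a = b := by simp [f, hb]
  have hfb : f b = c a := by simp [f]
  have hstep : ∀ x, f.SameCycle x (c x) := by
    intro x
    by_cases hxa : x = a
    · subst hxa
      exact ⟨2, by simp [pow_two, hfa, hfb]⟩
    by_cases hxb : x = b
    · rw [hxb, hb]
    · exact ⟨1, by simp [f, swap_apply_of_ne_of_ne hxa hxb]⟩
  refine ⟨a, by rw [hfa]; exact hab.symm, fun y hy => ?_⟩
  by_cases hyb : y = b
  · exact ⟨1, by simp [hfa, hyb]⟩
  have hcy : c y ≠ y := by
    intro hcy
    have hya : y ≠ a := by rintro rfl; exact ha hcy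
    exact hy (by simp only [f, mul_apply, swap_apply_of_ne_of_ne hya hyb, hcy])
  exact SameCycle.of_forall_sameCycle_apply hstep (hc.sameCycle ha hcy)

end Equiv.Perm

theorem numCycles_mul_of_disjoint {K : ℕ} {σ τ : Perm (Fin K)} (h : σ.Disjoint τ) :
    numCycles (σ * τ) + #τ.support = numCycles σ + τ.cycleType.card := by
  have hle : #(σ * τ).support ≤ K := by simpa using card_le_univ (σ * τ).support
  rw [h.card_support_mul] at hle
  unfold numCycles
  rw [h.cycleType_mul, h.card_support_mul, Multiset.card_add]
  omega

theorem numCycles_mul_swap_of_apply_eq_self {K : ℕ} {π : Perm (Fin K)} {a p : Fin K}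
    (hp : π p = p) (hap : a ≠ p) : numCycles (π * swap a p) + 1 = numCycles π := by
  by_cases ha : π a = a
  · have hd : π.Disjoint (swap a p) := fun x => by
      by_cases hx : x = a ∨ x = p
      · rcases hx with rfl | rfl <;> simp [ha, hp]
      · exact Or.inr (swap_apply_of_ne_of_ne (not_or.1 hx).1 (not_or.1 hx).2)
    have := numCycles_mul_of_disjoint hd
    rw [card_support_swap hap, card_cycleType_eq_one.2 (isCycle_swap hap)] at this
    omega
  · set c := π.cycleOf a
    set ρ := π * c⁻¹
    have hmem : c ∈ π.cycleFactorsFinset :=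
      cycleOf_mem_cycleFactorsFinset_iff.2 (mem_support.2 ha)
    have hd : ρ.Disjoint c := disjoint_mul_inv_of_mem_cycleFactorsFinset hmem
    have hca : c a ≠ a := by rwa [cycleOf_apply_self]
    have hcp : c p = p := by rw [cycleOf_apply]; split_ifs <;> simp [hp]
    have hρa : ρ a = a := (hd a).resolve_right hca
    have hρp : ρ p = p := by rw [mul_apply, inv_eq_iff_eq.2 hcp.symm, hp]
    have hd' : ρ.Disjoint (c * swap a p) := hd.mul_right fun x => by
      by_cases hx : x = a ∨ x = p
      · rcases hx with rfl | rfl <;> simp [hρa, hρp]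
      · exact Or.inr (swap_apply_of_ne_of_ne (not_or.1 hx).1 (not_or.1 hx).2)
    have hπ : π = ρ * c := (inv_mul_cancel_right π c).symm
    have hcyc := isCycle_cycleOf π ha
    have h1 := numCycles_mul_of_disjoint hd
    have h2 := numCycles_mul_of_disjoint hd'
    rw [← hπ, card_cycleType_eq_one.2 hcyc] at h1
    rw [← mul_assoc, ← hπ, card_cycleType_eq_one.2 (hcyc.mul_swap_of_apply_eq_self hca hcp),
      support_mul_swap_of_apply_eq_self hca hcp, card_insert_of_notMem (notMem_support.2 hcp)] at h2
    omega

theorem numCycles_extendDomain {N M : ℕ} {P : Fin M → Prop} [DecidablePred P]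
    (f : Fin N ≃ Subtype P) (σ : Perm (Fin N)) :
    numCycles (σ.extendDomain f) + N = numCycles σ + M := by
  have hN : #σ.support ≤ N := by simpa using card_le_univ σ.support
  have hM : #σ.support ≤ M := by
    simpa [card_support_extend_domain] using card_le_univ (σ.extendDomain f).support
  unfold numCycles
  rw [card_support_extend_domain, cycleType_extendDomain]
  omega

theorem val_finRotate {K : ℕ} (i : Fin K) :
    (finRotate K i : ℕ) = if (i : ℕ) + 1 = K then 0 else (i : ℕ) + 1 := by
  cases K with
  | zero => exact i.elim0
  | succ K =>
    rw [coe_finRotate]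
    simp [Fin.ext_iff]

section InsertChord

variable {N : ℕ}

-- Gap `p` lies just before position `p`; opening two new positions there moves every `x ≥ p`
-- to `x + 2`.
def openGap (p : Fin (N + 1)) (x : Fin N) : Fin (N + 2) :=
  ⟨if (x : ℕ) < p then x else x + 2, by split_ifs <;> omega⟩

theorem val_openGap (p : Fin (N + 1)) (x : Fin N) :
    (openGap p x : ℕ) = if (x : ℕ) < p then (x : ℕ) else (x : ℕ) + 2 := rfl

theorem openGap_injective (p : Fin (N + 1)) : Function.Injective (openGap p) := by
  intro x y h
  simp only [Fin.ext_iff, val_openGap] at h ⊢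
  split_ifs at h <;> omega

theorem openGap_ne_castSucc (p : Fin (N + 1)) (x : Fin N) : openGap p x ≠ p.castSucc := by
  simp only [ne_eq, Fin.ext_iff, val_openGap, Fin.val_castSucc]; split_ifs <;> omega

theorem openGap_ne_succ (p : Fin (N + 1)) (x : Fin N) : openGap p x ≠ p.succ := by
  simp only [ne_eq, Fin.ext_iff, val_openGap, Fin.val_succ]; split_ifs <;> omega

def gapEquiv (p : Fin (N + 1)) :
    Fin N ≃ {z : Fin (N + 2) // z ≠ p.castSucc ∧ z ≠ p.succ} where
  toFun x := ⟨openGap p x, openGap_ne_castSucc p x, openGap_ne_succ p x⟩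
  invFun z := ⟨if (z : ℕ) < p then z else z - 2, by
    have := z.2; simp only [ne_eq, Fin.ext_iff, Fin.val_castSucc, Fin.val_succ] at this
    split_ifs <;> omega⟩
  left_inv x := by ext; simp only [val_openGap]; split_ifs <;> omega
  right_inv z := by
    have := z.2; simp only [ne_eq, Fin.ext_iff, Fin.val_castSucc, Fin.val_succ] at this
    ext; simp only [val_openGap]; split_ifs <;> omega

theorem coe_gapEquiv (p : Fin (N + 1)) (x : Fin N) : (gapEquiv p x : Fin (N + 2)) = openGap p x :=
  rfl

theorem eq_castSucc_or_eq_succ_or_exists_openGap (p : Fin (N + 1)) (z : Fin (N + 2)) :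
    z = p.castSucc ∨ z = p.succ ∨ ∃ x, openGap p x = z := by
  by_cases h : z ≠ p.castSucc ∧ z ≠ p.succ
  · refine .inr (.inr ⟨(gapEquiv p).symm ⟨z, h⟩, ?_⟩)
    rw [← coe_gapEquiv, Equiv.apply_symm_apply]
  · tauto

def insertChord (p : Fin (N + 1)) (ι : Perm (Fin N)) : Perm (Fin (N + 2)) :=
  swap p.castSucc p.succ * ι.extendDomain (gapEquiv p)

variable (p : Fin (N + 1)) (ι : Perm (Fin N))

theorem extendDomain_gapEquiv_apply_castSucc :
    ι.extendDomain (gapEquiv p) p.castSucc = p.castSucc :=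
  extendDomain_apply_not_subtype _ _ (by simp)

theorem extendDomain_gapEquiv_apply_succ : ι.extendDomain (gapEquiv p) p.succ = p.succ :=
  extendDomain_apply_not_subtype _ _ (by simp)

theorem extendDomain_gapEquiv_apply_openGap (x : Fin N) :
    ι.extendDomain (gapEquiv p) (openGap p x) = openGap p (ι x) :=
  extendDomain_apply_image ι (gapEquiv p) x

theorem insertChord_apply_castSucc : insertChord p ι p.castSucc = p.succ := by
  simp [insertChord, extendDomain_gapEquiv_apply_castSucc]

theorem insertChord_apply_succ : insertChord p ι p.succ = p.castSucc := by
  simp [insertChord, extendDomain_gapEquiv_apply_succ]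

theorem insertChord_apply_openGap (x : Fin N) :
    insertChord p ι (openGap p x) = openGap p (ι x) := by
  rw [insertChord, mul_apply, extendDomain_gapEquiv_apply_openGap,
    swap_apply_of_ne_of_ne (openGap_ne_castSucc p _) (openGap_ne_succ p _)]

theorem insertChord_injective : Function.Injective (insertChord (N := N) p) :=
  (mul_right_injective _).comp (extendDomainHom_injective (gapEquiv p))

theorem insertChord_mul_self :
    insertChord p ι * insertChord p ι = (ι * ι).extendDomain (gapEquiv p) := by
  ext1 z
  rcases eq_castSucc_or_eq_succ_or_exists_openGap p z with rfl | rfl | ⟨x, rfl⟩ <;>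
    simp only [mul_apply, insertChord_apply_castSucc, insertChord_apply_succ,
      insertChord_apply_openGap, extendDomain_gapEquiv_apply_castSucc,
      extendDomain_gapEquiv_apply_succ, extendDomain_gapEquiv_apply_openGap]

theorem insertChord_mul_self_eq_one_iff :
    insertChord p ι * insertChord p ι = 1 ↔ ι * ι = 1 := by
  rw [insertChord_mul_self, extendDomain_eq_one_iff]

theorem insertChord_apply_ne_self_iff :
    (∀ z, insertChord p ι z ≠ z) ↔ ∀ x, ι x ≠ x := by
  refine ⟨fun h x hx => h (openGap p x) (by rw [insertChord_apply_openGap, hx]), fun h z => ?_⟩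
  rcases eq_castSucc_or_eq_succ_or_exists_openGap p z with rfl | rfl | ⟨x, rfl⟩
  · simp [insertChord_apply_castSucc, Fin.ext_iff]
  · simp [insertChord_apply_succ, Fin.ext_iff]
  · rw [insertChord_apply_openGap]
    exact fun hx => h x (openGap_injective p hx)

theorem exists_insertChord_eq {ι' : Perm (Fin (N + 2))} (hp : ι' p.castSucc = p.succ)
    (hι' : ι' * ι' = 1) : ∃ ι, insertChord p ι = ι' := by
  have hs : ι' p.succ = p.castSucc := by
    rw [← hp, ← mul_apply, hι', one_apply]
  obtain ⟨ι, hι⟩ := exists_extendDomain_eq (gapEquiv p) (σ := swap p.castSucc p.succ * ι')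
    fun z hz => by
      rcases not_and_or.1 hz with h | h <;> rw [not_ne_iff.1 h] <;> simp [hp, hs]
  exact ⟨ι, by rw [insertChord, hι, ← mul_assoc, swap_mul_self, one_mul]⟩

end InsertChord

section InsertChordCycles

variable {N : ℕ}

theorem exists_finRotate_mul_insertChord_eq (hN : 0 < N) (p : Fin (N + 1)) {ι : Perm (Fin N)}
    (hι : ι * ι = 1) : ∃ a : Fin N, finRotate (N + 2) * insertChord p ι =
      (finRotate N * ι).extendDomain (gapEquiv p) * swap (openGap p a) p.castSucc := by
  have hιι : ∀ x, ι (ι x) = x := fun x => by rw [← mul_apply, hι, one_apply]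
  -- The new chord makes `p + 1` a fixed point and splices `p` into the cycle through `ι q`,
  -- where `q` is the position cyclically before the gap.
  let q : Fin N := ⟨if (p : ℕ) = 0 then N - 1 else p - 1, by split_ifs <;> omega⟩
  refine ⟨ι q, Equiv.ext fun z => ?_⟩
  rcases eq_castSucc_or_eq_succ_or_exists_openGap p z with rfl | rfl | ⟨x, rfl⟩
  · rw [mul_apply, mul_apply, insertChord_apply_castSucc, swap_apply_right,
      extendDomain_gapEquiv_apply_openGap, mul_apply, hιι]
    simp only [Fin.ext_iff, val_finRotate, val_openGap, Fin.val_succ, q]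
    split_ifs <;> omega
  · rw [mul_apply, mul_apply, insertChord_apply_succ, swap_apply_of_ne_of_ne
      (openGap_ne_succ p _).symm (by simp [Fin.ext_iff]), extendDomain_gapEquiv_apply_succ]
    simp only [Fin.ext_iff, val_finRotate, Fin.val_castSucc, Fin.val_succ]
    split_ifs <;> omega
  · rw [mul_apply, mul_apply, insertChord_apply_openGap]
    by_cases hx : x = ι q
    · rw [hx, swap_apply_left, extendDomain_gapEquiv_apply_castSucc, hιι]
      simp only [Fin.ext_iff, val_finRotate, val_openGap, Fin.val_castSucc, q]
      split_ifs <;> omega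
    · have hxq : (ι x : ℕ) ≠ q := fun h => hx (by rw [← Fin.ext h, hιι])
      rw [swap_apply_of_ne_of_ne (fun h => hx (openGap_injective p h))
        (openGap_ne_castSucc p x), extendDomain_gapEquiv_apply_openGap, mul_apply]
      simp only [Fin.ext_iff, val_finRotate, val_openGap, q] at hxq ⊢
      split_ifs at hxq ⊢ <;> omega

theorem numCycles_finRotate_mul_insertChord (hN : 0 < N) (p : Fin (N + 1)) {ι : Perm (Fin N)}
    (hι : ι * ι = 1) :
    numCycles (finRotate (N + 2) * insertChord p ι) = numCycles (finRotate N * ι) + 1 := by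
  obtain ⟨a, ha⟩ := exists_finRotate_mul_insertChord_eq hN p hι
  have hfix := numCycles_mul_swap_of_apply_eq_self
    (extendDomain_gapEquiv_apply_castSucc p (finRotate N * ι)) (openGap_ne_castSucc p a)
  have hext := numCycles_extendDomain (gapEquiv p) (finRotate N * ι)
  rw [ha]
  omega

end InsertChordCycles

section OneChords

variable {N : ℕ}

def oneChords {K : ℕ} (ι : Perm (Fin K)) : Finset (Fin K) :=
  univ.filter fun i => (ι i : ℕ) = i + 1

-- Gap `j + 1` lies inside the 1-chord `(j, j + 1)`: a chord inserted there destroys it.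
def splitGaps (ι : Perm (Fin N)) : Finset (Fin (N + 1)) :=
  (oneChords ι).map (Fin.succEmb N)

theorem card_oneChords_filter_succ_eq (p : Fin (N + 1)) (ι : Perm (Fin N)) :
    #((oneChords ι).filter fun j => j.succ = p) = if p ∈ splitGaps ι then 1 else 0 := by
  have h : (splitGaps ι).filter (· = p) =
      ((oneChords ι).filter fun j => j.succ = p).map (Fin.succEmb N) := by
    rw [splitGaps, filter_map]; rfl
  rw [← card_map, ← h, filter_eq']
  split_ifs <;> rfl

theorem oneChords_insertChord (p : Fin (N + 1)) (ι : Perm (Fin N)) :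
    oneChords (insertChord p ι) = insert p.castSucc
      (((oneChords ι).filter fun j => j.succ ≠ p).map ⟨openGap p, openGap_injective p⟩) := by
  ext z
  rcases eq_castSucc_or_eq_succ_or_exists_openGap p z with rfl | rfl | ⟨x, rfl⟩
  · simp [oneChords, insertChord_apply_castSucc]
  · simp only [oneChords, mem_filter, mem_univ, true_and, insertChord_apply_succ, mem_insert,
      mem_map, Function.Embedding.coeFn_mk, Fin.val_castSucc, Fin.val_succ]
    refine iff_of_false (by omega) ?_
    rintro (h | ⟨x, -, hx⟩)
    · simp [Fin.ext_iff] at h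
    · exact openGap_ne_succ p x hx
  · simp only [oneChords, mem_filter, mem_univ, true_and, insertChord_apply_openGap, mem_insert,
      mem_map, Function.Embedding.coeFn_mk, (openGap_injective p).eq_iff, exists_eq_right,
      openGap_ne_castSucc, false_or]
    simp only [ne_eq, Fin.ext_iff, Fin.val_succ, val_openGap]
    have := (ι x).2
    split_ifs <;> omega

theorem card_oneChords_insertChord (p : Fin (N + 1)) (ι : Perm (Fin N)) :
    #(oneChords (insertChord p ι)) + (if p ∈ splitGaps ι then 1 else 0) =
      #(oneChords ι) + 1 := by
  rw [oneChords_insertChord, card_insert_of_notMem (by simp [openGap_ne_castSucc]), card_map,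
    ← card_oneChords_filter_succ_eq]
  have := card_filter_add_card_filter_not (s := oneChords ι) (fun j => j.succ ≠ p)
  simp only [ne_eq, not_not] at this ⊢
  omega

end OneChords

-- With `K = 2n` and `r = n + 1` these are the diagrams counted by `cLCD2 g n m`.
def diagrams (K r g m : ℕ) : Finset (Perm (Fin K)) :=
  univ.filter fun ι => ι * ι = 1 ∧ (∀ i, ι i ≠ i) ∧
    numCycles (finRotate K * ι) + 2 * g = r ∧ #(oneChords ι) = m

section Recursion

variable {N r g m : ℕ}

theorem insertChord_mem_diagrams_iff (hN : 0 < N) (p : Fin (N + 1)) (ι : Perm (Fin N)) :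
    insertChord p ι ∈ diagrams (N + 2) (r + 1) g (m + 1) ↔
      (ι ∈ diagrams N r g (m + 1) ∧ p ∈ splitGaps ι) ∨
        (ι ∈ diagrams N r g m ∧ p ∉ splitGaps ι) := by
  simp only [diagrams, mem_filter, mem_univ, true_and, insertChord_mul_self_eq_one_iff,
    insertChord_apply_ne_self_iff]
  by_cases hι : ι * ι = 1
  · rw [numCycles_finRotate_mul_insertChord hN p hι]
    have hc : ∀ c, c + 1 + 2 * g = r + 1 ↔ c + 2 * g = r := fun c => by omega
    have ho := card_oneChords_insertChord p ι
    by_cases hs : p ∈ splitGaps ι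
    · have : #(oneChords (insertChord p ι)) = #(oneChords ι) := by simpa [hs] using ho
      simp [hs, hι, hc, this]
    · have : #(oneChords (insertChord p ι)) = #(oneChords ι) + 1 := by simpa [hs] using ho
      simp [hs, hι, hc, this]
  · simp [hι]

theorem card_splitGaps (ι : Perm (Fin N)) : #(splitGaps ι) = #(oneChords ι) := card_map _

theorem castSucc_mem_oneChords_insertChord (p : Fin (N + 1)) (ι : Perm (Fin N)) :
    p.castSucc ∈ oneChords (insertChord p ι) := by
  rw [oneChords_insertChord]
  exact mem_insert_self _ _

theorem card_oneChords_of_mem_diagrams {K : ℕ} {ι : Perm (Fin K)} (h : ι ∈ diagrams K r g m) :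
    #(oneChords ι) = m :=
  (mem_filter.1 h).2.2.2.2

variable (N r g m)

def markedDiagrams : Finset (Σ _ : Perm (Fin N), Fin N) :=
  (diagrams N r g m).sigma oneChords

-- The gaps of diagrams in which inserting a 1-chord leaves exactly `m + 1` of them.
def chordInsertions : Finset (Σ _ : Perm (Fin N), Fin (N + 1)) :=
  (diagrams N r g (m + 1)).sigma splitGaps ∪ (diagrams N r g m).sigma fun ι => (splitGaps ι)ᶜ

theorem card_markedDiagrams : #(markedDiagrams N r g m) = m * #(diagrams N r g m) := by
  rw [markedDiagrams, card_sigma, sum_const_nat fun ι hι => card_oneChords_of_mem_diagrams hι,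
    mul_comm]

theorem card_chordInsertions_add :
    #(chordInsertions N r g m) + m * #(diagrams N r g m) =
      (m + 1) * #(diagrams N r g (m + 1)) + (N + 1) * #(diagrams N r g m) := by
  have h_disjoint : Disjoint ((diagrams N r g (m + 1)).sigma splitGaps)
      ((diagrams N r g m).sigma fun ι => (splitGaps ι)ᶜ) := by
    refine disjoint_left.2 fun x hx hx' => ?_
    have h1 := card_oneChords_of_mem_diagrams (mem_sigma.1 hx).1
    have h2 := card_oneChords_of_mem_diagrams (mem_sigma.1 hx').1
    omega
  have h_card_splitGaps {k} {ι} (h : ι ∈ diagrams N r g k) : #(splitGaps ι) = k :=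
    (card_splitGaps ι).trans (card_oneChords_of_mem_diagrams h)
  calc #(chordInsertions N r g m) + m * #(diagrams N r g m)
      = (m + 1) * #(diagrams N r g (m + 1)) +
          ∑ ι ∈ diagrams N r g m, (#(splitGaps ι)ᶜ + #(splitGaps ι)) := by
        rw [chordInsertions, card_union_of_disjoint h_disjoint, card_sigma, card_sigma,
          sum_add_distrib, sum_const_nat fun ι hι => h_card_splitGaps hι,
          sum_const_nat fun ι hι => h_card_splitGaps hι]
        ring
    _ = (m + 1) * #(diagrams N r g (m + 1)) + (N + 1) * #(diagrams N r g m) := by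
        simp only [card_compl_add_card, Fintype.card_fin, sum_const, smul_eq_mul, mul_comm]

variable {N r g m}

theorem card_markedDiagrams_eq_card_chordInsertions (hN : 0 < N) :
    #(markedDiagrams (N + 2) (r + 1) g (m + 1)) = #(chordInsertions N r g m) := by
  have h_mem (ι : Perm (Fin N)) (p : Fin (N + 1)) :
      ⟨ι, p⟩ ∈ chordInsertions N r g m ↔
        insertChord p ι ∈ diagrams (N + 2) (r + 1) g (m + 1) := by
    rw [insertChord_mem_diagrams_iff hN]
    simp only [chordInsertions, mem_union, mem_sigma, mem_compl]
  symm
  refine card_bij (fun x _ => ⟨insertChord x.2 x.1, x.2.castSucc⟩) ?_ ?_ ?_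
  · rintro ⟨ι, p⟩ hx
    exact mem_sigma.2 ⟨(h_mem ι p).1 hx, castSucc_mem_oneChords_insertChord p ι⟩
  · rintro ⟨ι, p⟩ - ⟨ι', p'⟩ - h
    simp only [Sigma.mk.inj_iff, heq_iff_eq, Fin.castSucc_inj] at h
    obtain ⟨h, rfl⟩ := h
    rw [insertChord_injective p h]
  · rintro ⟨ι', j⟩ hx
    obtain ⟨hι', hj⟩ := mem_sigma.1 hx
    have hj' : (ι' j : ℕ) = j + 1 := (mem_filter.1 hj).2
    obtain ⟨p, rfl⟩ : ∃ p : Fin (N + 1), p.castSucc = j := ⟨⟨j, by omega⟩, rfl⟩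
    obtain ⟨ι, rfl⟩ := exists_insertChord_eq p (Fin.ext hj') (mem_filter.1 hι').2.1
    exact ⟨⟨ι, p⟩, (h_mem ι p).2 hι', rfl⟩

theorem card_diagrams_add_chord (hN : 0 < N) :
    (m + 1) * #(diagrams (N + 2) (r + 1) g (m + 1)) + m * #(diagrams N r g m) =
      (m + 1) * #(diagrams N r g (m + 1)) + (N + 1) * #(diagrams N r g m) := by
  rw [← card_markedDiagrams, card_markedDiagrams_eq_card_chordInsertions hN,
    card_chordInsertions_add]

end Recursion

theorem cLCD2_eq_card_diagrams (g n m : ℕ) (hn : n ≠ 0) :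
    cLCD2 g n m = #(diagrams (2 * n) (n + 1) g m) := by
  rw [cLCD2, if_neg hn, Nat.card_eq_fintype_card, Fintype.card_subtype]
  rfl

theorem cLCD2_one (g k : ℕ) : cLCD2 g 1 k = if g = 0 ∧ k = 1 then 1 else 0 := by
  have h_fpf : ∀ ι : Perm (Fin 2), (∀ i, ι i ≠ i) ↔ ι = swap 0 1 := by decide
  have h_rot : finRotate 2 * swap 0 1 = 1 := by decide
  have h_one : #(oneChords (swap 0 1 : Perm (Fin 2))) = 1 := by decide
  have h_mem : ∀ ι, ι ∈ diagrams 2 2 g k ↔ ι = swap 0 1 ∧ g = 0 ∧ k = 1 := fun ι => by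
    simp only [diagrams, mem_filter, mem_univ, true_and, h_fpf]
    constructor
    · rintro ⟨-, rfl, h, rfl⟩
      simp only [h_rot, numCycles, support_one, card_empty, cycleType_one] at h
      simp_all
    · rintro ⟨rfl, rfl, rfl⟩
      simp [h_rot, h_one, numCycles]
  rw [cLCD2_eq_card_diagrams g 1 k one_ne_zero]
  split_ifs with h
  · exact card_eq_one.2 ⟨swap 0 1, eq_singleton_iff_unique_mem.2 ⟨(h_mem _).2 ⟨rfl, h⟩,
      fun ι hι => ((h_mem ι).1 hι).1⟩⟩
  · exact card_eq_zero.2 (eq_empty_of_forall_notMem fun ι hι => h ((h_mem ι).1 hι).2)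

/-- The recursion `(m+1)·c_g(n+1,m+1) = (m+1)·c_g(n,m+1) + (2n+1-m)·c_g(n,m)` in `ℤ`. -/
theorem statement13 (g n m : ℕ) :
    ((m : ℤ) + 1) * cLCD2 g (n + 1) (m + 1) =
      ((m : ℤ) + 1) * cLCD2 g n (m + 1) + (2 * (n : ℤ) + 1 - m) * cLCD2 g n m := by
  rcases Nat.eq_zero_or_pos n with rfl | hn
  -- `cLCD2 g 0` is a convention: the empty permutation has no cycles, not one.
  · rw [zero_add, cLCD2_one]
    simp only [cLCD2, if_true]
    rcases m with _ | m <;> by_cases hg : g = 0 <;> simp [hg]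
  · have key := card_diagrams_add_chord (N := 2 * n) (r := n + 1) (g := g) (m := m) (by omega)
    have h_succ : cLCD2 g (n + 1) (m + 1) = #(diagrams (2 * n + 2) (n + 1 + 1) g (m + 1)) :=
      cLCD2_eq_card_diagrams g (n + 1) (m + 1) n.succ_ne_zero
    rw [h_succ, cLCD2_eq_card_diagrams g n _ hn.ne', cLCD2_eq_card_diagrams g n _ hn.ne']
    zify at key
    linarith
end
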